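/- arXiv:1210.7094 — 4 statements merged into one kernel-verified Lean document; each statement's English description precedes it below -/
import Mathlib

section
/- In the universal enveloping algebra of the Takiff superalgebra of gl(1|1), the elements Q₁ = NẼ + ÑE + ψ⁻ψ̃⁺ + ψ̃⁻ψ⁺ and Q₂ = ÑẼ + ψ̃⁻ψ̃⁺ are central. -/
/-- The generators of the Takiff superalgebra `g̃l(1|1)`:
even `N, E, Ñ, Ẽ` and odd `ψ⁺, ψ⁻, ψ̃⁺, ψ̃⁻`. -/
inductive TGl11Gen : Type
  | N | E | Nt | Et | pp | pm | tp | tm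
  deriving DecidableEq

namespace TGl11Gen

/-- Parity: `true` for the odd generators `ψ±, ψ̃±`. -/
def odd : TGl11Gen → Bool
  | N | E | Nt | Et => false
  | pp | pm | tp | tm => true

open FreeAlgebra in
/-- The super-bracket table of `g̃l(1|1)` (as an element of the free algebra):
`[N,ψ±] = ±ψ±`, `{ψ⁺,ψ⁻} = E`, `[N,ψ̃±] = [Ñ,ψ±] = ±ψ̃±`, `{ψ⁺,ψ̃⁻} = {ψ̃⁺,ψ⁻} = Ẽ`,
all other brackets zero. -/
def sbr : TGl11Gen → TGl11Gen → FreeAlgebra ℂ TGl11Gen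
  | N, pp => ι ℂ pp
  | pp, N => -ι ℂ pp
  | N, pm => -ι ℂ pm
  | pm, N => ι ℂ pm
  | N, tp => ι ℂ tp
  | tp, N => -ι ℂ tp
  | N, tm => -ι ℂ tm
  | tm, N => ι ℂ tm
  | Nt, pp => ι ℂ tp
  | pp, Nt => -ι ℂ tp
  | Nt, pm => -ι ℂ tm
  | pm, Nt => ι ℂ tm
  | pp, pm => ι ℂ E
  | pm, pp => ι ℂ E
  | pp, tm => ι ℂ Et
  | tm, pp => ι ℂ Et
  | tp, pm => ι ℂ Et
  | pm, tp => ι ℂ Et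
  | _, _ => 0

/-- The sign in the supercommutator `[a,b] = ab − (−1)^{|a||b|} ba`. -/
def sign (a b : TGl11Gen) : ℂ := if a.odd && b.odd then -1 else 1

/-- The defining relations of the universal enveloping superalgebra of `g̃l(1|1)`:
for all generators `a, b`, the supercommutator `ab − (−1)^{|a||b|} ba` equals `[a,b]`. -/
inductive Rel : FreeAlgebra ℂ TGl11Gen → FreeAlgebra ℂ TGl11Gen → Prop
  | mk (a b : TGl11Gen) :
      Rel (FreeAlgebra.ι ℂ a * FreeAlgebra.ι ℂ b -
        sign a b • (FreeAlgebra.ι ℂ b * FreeAlgebra.ι ℂ a)) (sbr a b)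

end TGl11Gen

/-- The universal enveloping superalgebra of the Takiff superalgebra of `gl(1|1)`. -/
abbrev UTGl11 : Type := RingQuot TGl11Gen.Rel

/-- The image of a generator in the universal enveloping superalgebra. -/
noncomputable def gen (a : TGl11Gen) : UTGl11 :=
  RingQuot.mkAlgHom ℂ TGl11Gen.Rel (FreeAlgebra.ι ℂ a)

open TGl11Gen in
/-- The Casimir `Q₁ = NẼ + ÑE + ψ⁻ψ̃⁺ + ψ̃⁻ψ⁺`. -/
noncomputable def Q1 : UTGl11 :=
  gen N * gen Et + gen Nt * gen E + gen pm * gen tp + gen tm * gen pp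

open TGl11Gen in
/-- The Casimir `Q₂ = ÑẼ + ψ̃⁻ψ̃⁺`. -/
noncomputable def Q2 : UTGl11 := gen Nt * gen Et + gen tm * gen tp

/-!
`Q₁` and `Q₂` are even, so centrality amounts to commuting with each generator `a`. By the
super-Leibniz rule `[a, yz} = [a, y}z ± y[a, z}` the brackets produced by the quadratic terms
cancel in pairs; e.g. for `a = Ñ`, `ψ⁻ψ̃⁺` contributes `-ψ̃⁻ψ̃⁺` and `ψ̃⁻ψ⁺` contributes `ψ̃⁻ψ̃⁺`.
Mechanically, both sides are brought into normal order using the defining relations and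
`ψ² = 0` for odd `ψ`, and the normal forms agree.
-/

/- `FreeAlgebra`'s `Ring` instance is built by the non-reducible `Algebra.semiringToRing`, so the
ring-derived `HasDistribNeg` does not unify, up to instances, with the multiplication of
`UTGl11` coming from the semiring; this shortcut instance lets `neg_mul` and `mul_neg` fire. -/
instance UTGl11.instHasDistribNeg : HasDistribNeg UTGl11 := NonUnitalNonAssocRing.toHasDistribNeg

namespace TGl11Gen

lemma mkAlgHom_ι (a : TGl11Gen) : RingQuot.mkAlgHom ℂ Rel (FreeAlgebra.ι ℂ a) = gen a := rfl

lemma gen_mul_gen (a b : TGl11Gen) :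
    gen a * gen b = (if a.odd && b.odd then -(gen b * gen a) else gen b * gen a) +
      RingQuot.mkAlgHom ℂ Rel (sbr a b) := by
  have h := RingQuot.mkAlgHom_rel ℂ (Rel.mk a b)
  rw [map_sub, map_smul, map_mul, map_mul, sub_eq_iff_eq_add', mkAlgHom_ι, mkAlgHom_ι] at h
  rw [h, sign]
  split_ifs
  exacts [congrArg (· + _) (neg_one_smul ℂ (gen b * gen a)),
    congrArg (· + _) (one_smul ℂ (gen b * gen a))]

lemma gen_mul_self_of_odd {a : TGl11Gen} (h : a.odd) : gen a * gen a = 0 := by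
  have hs : sbr a a = 0 := by cases a <;> rfl
  have hneg := gen_mul_gen a a
  simp only [h, Bool.and_self, if_true, hs, map_zero, add_zero] at hneg
  have h2 : (2 : ℂ) • (gen a * gen a) = 0 :=
    (two_smul ℂ _).trans (add_eq_zero_iff_eq_neg.mpr hneg)
  exact (smul_eq_zero.mp h2).resolve_left two_ne_zero

lemma gen_mul_gen_mul_of_odd {a : TGl11Gen} (h : a.odd) (x : UTGl11) :
    gen a * (gen a * x) = 0 := by
  rw [← mul_assoc, gen_mul_self_of_odd h, zero_mul]

/- The order of generators in a normal-ordered monomial. The two `rank`-guarded lemmas below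
orient the defining relations into a terminating rewrite system towards this normal form. -/
def rank : TGl11Gen → ℕ
  | N => 0 | Nt => 1 | E => 2 | Et => 3 | pp => 4 | tp => 5 | pm => 6 | tm => 7

lemma gen_mul_gen_of_rank_lt {a b : TGl11Gen} (_ : b.rank < a.rank) :
    gen a * gen b = (if a.odd && b.odd then -(gen b * gen a) else gen b * gen a) +
      RingQuot.mkAlgHom ℂ Rel (sbr a b) :=
  gen_mul_gen a b

lemma gen_mul_gen_mul_of_rank_lt {a b : TGl11Gen} (h : b.rank < a.rank) (x : UTGl11) :
    gen a * (gen b * x) =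
      (if a.odd && b.odd then -(gen b * (gen a * x)) else gen b * (gen a * x)) +
        RingQuot.mkAlgHom ℂ Rel (sbr a b) * x := by
  rw [← mul_assoc, gen_mul_gen_of_rank_lt h, add_mul, ite_mul, neg_mul, mul_assoc]

end TGl11Gen

open TGl11Gen in
/-- In the universal enveloping algebra of the Takiff superalgebra of `gl(1|1)`, the
elements `Q₁ = NẼ + ÑE + ψ⁻ψ̃⁺ + ψ̃⁻ψ⁺` and `Q₂ = ÑẼ + ψ̃⁻ψ̃⁺` are central: being even,
they supercommute with (i.e. commute with) every generator. -/
theorem casimirs_central : ∀ a : TGl11Gen,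
    Q1 * gen a = gen a * Q1 ∧ Q2 * gen a = gen a * Q2 := by
  intro a
  cases a <;> constructor <;>
    simp (disch := decide) only [Q1, Q2, mul_add, add_mul, mul_assoc, neg_mul, mul_neg, neg_neg,
      mul_zero, zero_mul, add_zero, neg_zero, map_neg, map_zero, mkAlgHom_ι, sbr, odd,
      Bool.and_self, Bool.and_false, Bool.false_eq_true, reduceIte, gen_mul_gen_of_rank_lt,
      gen_mul_gen_mul_of_rank_lt, gen_mul_gen_mul_of_odd, gen_mul_self_of_odd] <;>
    abel
end

section
/- The Verma module of the Takiff superalgebra of gl(1|1) with highest weight (n,e,ñ,ẽ) is irreducible if and only if ẽ ≠ 0. -/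
/-- A representation of the Takiff superalgebra `g̃l(1|1)` of `gl(1|1)` on a complex
vector space `V`: linear endomorphisms for the even generators `N, E, Ñ, Ẽ` and the odd
generators `ψ⁺, ψ⁻, ψ̃⁺, ψ̃⁻`, subject to all the (super)commutation relations:
`[N,ψ±] = ±ψ±`, `{ψ⁺,ψ⁻} = E`, `[N,ψ̃±] = [Ñ,ψ±] = ±ψ̃±`, `{ψ⁺,ψ̃⁻} = {ψ̃⁺,ψ⁻} = Ẽ`,
with all remaining (super)brackets equal to zero. -/
structure TakiffGl11Rep (V : Type*) [AddCommGroup V] [Module ℂ V] where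
  N : V →ₗ[ℂ] V
  E : V →ₗ[ℂ] V
  Nt : V →ₗ[ℂ] V
  Et : V →ₗ[ℂ] V
  pp : V →ₗ[ℂ] V
  pm : V →ₗ[ℂ] V
  tp : V →ₗ[ℂ] V
  tm : V →ₗ[ℂ] V
  rel_N_E : N ∘ₗ E = E ∘ₗ N
  rel_N_Nt : N ∘ₗ Nt = Nt ∘ₗ N
  rel_N_Et : N ∘ₗ Et = Et ∘ₗ N
  rel_E_Nt : E ∘ₗ Nt = Nt ∘ₗ E
  rel_E_Et : E ∘ₗ Et = Et ∘ₗ E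
  rel_Nt_Et : Nt ∘ₗ Et = Et ∘ₗ Nt
  rel_N_pp : N ∘ₗ pp - pp ∘ₗ N = pp
  rel_N_pm : N ∘ₗ pm - pm ∘ₗ N = -pm
  rel_N_tp : N ∘ₗ tp - tp ∘ₗ N = tp
  rel_N_tm : N ∘ₗ tm - tm ∘ₗ N = -tm
  rel_E_pp : E ∘ₗ pp = pp ∘ₗ E
  rel_E_pm : E ∘ₗ pm = pm ∘ₗ E
  rel_E_tp : E ∘ₗ tp = tp ∘ₗ E
  rel_E_tm : E ∘ₗ tm = tm ∘ₗ E
  rel_Nt_pp : Nt ∘ₗ pp - pp ∘ₗ Nt = tp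
  rel_Nt_pm : Nt ∘ₗ pm - pm ∘ₗ Nt = -tm
  rel_Nt_tp : Nt ∘ₗ tp = tp ∘ₗ Nt
  rel_Nt_tm : Nt ∘ₗ tm = tm ∘ₗ Nt
  rel_Et_pp : Et ∘ₗ pp = pp ∘ₗ Et
  rel_Et_pm : Et ∘ₗ pm = pm ∘ₗ Et
  rel_Et_tp : Et ∘ₗ tp = tp ∘ₗ Et
  rel_Et_tm : Et ∘ₗ tm = tm ∘ₗ Et
  rel_pp_pp : pp ∘ₗ pp = 0
  rel_pm_pm : pm ∘ₗ pm = 0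
  rel_tp_tp : tp ∘ₗ tp = 0
  rel_tm_tm : tm ∘ₗ tm = 0
  rel_pp_pm : pp ∘ₗ pm + pm ∘ₗ pp = E
  rel_pp_tp : pp ∘ₗ tp + tp ∘ₗ pp = 0
  rel_pp_tm : pp ∘ₗ tm + tm ∘ₗ pp = Et
  rel_pm_tp : pm ∘ₗ tp + tp ∘ₗ pm = Et
  rel_pm_tm : pm ∘ₗ tm + tm ∘ₗ pm = 0
  rel_tp_tm : tp ∘ₗ tm + tm ∘ₗ tp = 0

namespace TakiffGl11Rep

variable {V : Type*} [AddCommGroup V] [Module ℂ V] (ρ : TakiffGl11Rep V)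

/-- A submodule invariant under the action of `g̃l(1|1)`. -/
def Invariant (W : Submodule ℂ V) : Prop :=
  ∀ w ∈ W, ρ.N w ∈ W ∧ ρ.E w ∈ W ∧ ρ.Nt w ∈ W ∧ ρ.Et w ∈ W ∧
    ρ.pp w ∈ W ∧ ρ.pm w ∈ W ∧ ρ.tp w ∈ W ∧ ρ.tm w ∈ W

/-- `v` is a highest weight vector of weight `(n, e, ñ, ẽ)`: a nonzero simultaneous
eigenvector of the Cartan generators annihilated by the raising operators `ψ⁺, ψ̃⁺`. -/
def IsHW (v : V) (n e nt et : ℂ) : Prop :=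
  v ≠ 0 ∧ ρ.N v = n • v ∧ ρ.E v = e • v ∧ ρ.Nt v = nt • v ∧ ρ.Et v = et • v ∧
    ρ.pp v = 0 ∧ ρ.tp v = 0

/-- `(V, v)` is the Verma module of highest weight `(n, e, ñ, ẽ)`: `v` is a highest
weight vector of that weight, the lowering operators `ψ⁻, ψ̃⁻` act freely on `v`
(`v, ψ⁻v, ψ̃⁻v, ψ̃⁻ψ⁻v` are linearly independent), and `v` generates `V`. -/
def IsVerma (v : V) (n e nt et : ℂ) : Prop :=
  ρ.IsHW v n e nt et ∧
  LinearIndependent ℂ ![v, ρ.pm v, ρ.tm v, ρ.tm (ρ.pm v)] ∧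
  ∀ W : Submodule ℂ V, ρ.Invariant W → v ∈ W → W = ⊤

/-- The quadratic Casimir `Q₁ = NẼ + ÑE + ψ⁻ψ̃⁺ + ψ̃⁻ψ⁺`. -/
def Q₁ : V →ₗ[ℂ] V := ρ.N ∘ₗ ρ.Et + ρ.Nt ∘ₗ ρ.E + ρ.pm ∘ₗ ρ.tp + ρ.tm ∘ₗ ρ.pp

/-- The quadratic Casimir `Q₂ = ÑẼ + ψ̃⁻ψ̃⁺`. -/
def Q₂ : V →ₗ[ℂ] V := ρ.Nt ∘ₗ ρ.Et + ρ.tm ∘ₗ ρ.tp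

end TakiffGl11Rep

/-! Since the span of `v, ψ⁻v, ψ̃⁻v, ψ̃⁻ψ⁻v` is invariant and contains `v`, every vector is
`a v + b ψ⁻v + c ψ̃⁻v + d ψ̃⁻ψ⁻v`. If `ẽ ≠ 0`, applying `ψ̃⁺ψ⁺`, `ψ̃⁺`, `ψ⁺` or nothing to
such a nonzero vector, according to whether `d`, `b`, `c` or only `a` is nonzero, gives a nonzero
multiple of `v`, so every nonzero invariant subspace contains the generator `v`. If `ẽ = 0`, the
span of `ψ̃⁻v, ψ̃⁻ψ⁻v` is invariant, nonzero, and misses `v`. -/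

namespace TakiffGl11Rep

variable {V : Type*} [AddCommGroup V] [Module ℂ V] (ρ : TakiffGl11Rep V)

section Relations

/- Oriented so that `simp` moves the Cartan and raising generators to the right of `ψ⁻, ψ̃⁻`,
where they meet the highest weight vector. -/

variable (x : V)

@[simp] theorem E_pm_apply : ρ.E (ρ.pm x) = ρ.pm (ρ.E x) := LinearMap.congr_fun ρ.rel_E_pm x
@[simp] theorem E_tm_apply : ρ.E (ρ.tm x) = ρ.tm (ρ.E x) := LinearMap.congr_fun ρ.rel_E_tm x
@[simp] theorem Et_pm_apply : ρ.Et (ρ.pm x) = ρ.pm (ρ.Et x) := LinearMap.congr_fun ρ.rel_Et_pm x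
@[simp] theorem Et_tm_apply : ρ.Et (ρ.tm x) = ρ.tm (ρ.Et x) := LinearMap.congr_fun ρ.rel_Et_tm x
@[simp] theorem Nt_tm_apply : ρ.Nt (ρ.tm x) = ρ.tm (ρ.Nt x) := LinearMap.congr_fun ρ.rel_Nt_tm x

@[simp] theorem N_pm_apply : ρ.N (ρ.pm x) = ρ.pm (ρ.N x) - ρ.pm x := by
  have h := LinearMap.congr_fun ρ.rel_N_pm x
  simp only [LinearMap.sub_apply, LinearMap.comp_apply, LinearMap.neg_apply] at h
  linear_combination (norm := module) h

@[simp] theorem N_tm_apply : ρ.N (ρ.tm x) = ρ.tm (ρ.N x) - ρ.tm x := by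
  have h := LinearMap.congr_fun ρ.rel_N_tm x
  simp only [LinearMap.sub_apply, LinearMap.comp_apply, LinearMap.neg_apply] at h
  linear_combination (norm := module) h

@[simp] theorem Nt_pm_apply : ρ.Nt (ρ.pm x) = ρ.pm (ρ.Nt x) - ρ.tm x := by
  have h := LinearMap.congr_fun ρ.rel_Nt_pm x
  simp only [LinearMap.sub_apply, LinearMap.comp_apply, LinearMap.neg_apply] at h
  linear_combination (norm := module) h

@[simp] theorem pm_pm_apply : ρ.pm (ρ.pm x) = 0 := by
  simpa using LinearMap.congr_fun ρ.rel_pm_pm x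

@[simp] theorem tm_tm_apply : ρ.tm (ρ.tm x) = 0 := by
  simpa using LinearMap.congr_fun ρ.rel_tm_tm x

@[simp] theorem pm_tm_apply : ρ.pm (ρ.tm x) = -ρ.tm (ρ.pm x) := by
  simpa [add_eq_zero_iff_eq_neg] using LinearMap.congr_fun ρ.rel_pm_tm x

@[simp] theorem pp_pm_apply : ρ.pp (ρ.pm x) = ρ.E x - ρ.pm (ρ.pp x) := by
  simpa [eq_sub_iff_add_eq] using LinearMap.congr_fun ρ.rel_pp_pm x

@[simp] theorem pp_tm_apply : ρ.pp (ρ.tm x) = ρ.Et x - ρ.tm (ρ.pp x) := by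
  simpa [eq_sub_iff_add_eq] using LinearMap.congr_fun ρ.rel_pp_tm x

@[simp] theorem tp_pm_apply : ρ.tp (ρ.pm x) = ρ.Et x - ρ.pm (ρ.tp x) := by
  simpa [eq_sub_iff_add_eq'] using LinearMap.congr_fun ρ.rel_pm_tp x

@[simp] theorem tp_tm_apply : ρ.tp (ρ.tm x) = -ρ.tm (ρ.tp x) := by
  simpa [add_eq_zero_iff_eq_neg] using LinearMap.congr_fun ρ.rel_tp_tm x

end Relations

open Submodule

theorem invariant_span_of_forall_mem {S : Set V}
    (hS : ∀ x ∈ S, ρ.N x ∈ span ℂ S ∧ ρ.E x ∈ span ℂ S ∧ ρ.Nt x ∈ span ℂ S ∧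
      ρ.Et x ∈ span ℂ S ∧ ρ.pp x ∈ span ℂ S ∧ ρ.pm x ∈ span ℂ S ∧ ρ.tp x ∈ span ℂ S ∧
      ρ.tm x ∈ span ℂ S) :
    ρ.Invariant (span ℂ S) := by
  have stable (X : V →ₗ[ℂ] V) (hX : ∀ x ∈ S, X x ∈ span ℂ S) : span ℂ S ≤ (span ℂ S).comap X :=
    span_le.mpr hX
  intro w hw
  refine ⟨stable _ ?_ hw, stable _ ?_ hw, stable _ ?_ hw, stable _ ?_ hw, stable _ ?_ hw,
    stable _ ?_ hw, stable _ ?_ hw, stable _ ?_ hw⟩ <;>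
  intro x hx <;> have := hS x hx <;> tauto

variable {ρ} {v : V} {n e nt et : ℂ}

theorem IsHW.N_apply (hv : ρ.IsHW v n e nt et) : ρ.N v = n • v := hv.2.1
theorem IsHW.E_apply (hv : ρ.IsHW v n e nt et) : ρ.E v = e • v := hv.2.2.1
theorem IsHW.Nt_apply (hv : ρ.IsHW v n e nt et) : ρ.Nt v = nt • v := hv.2.2.2.1
theorem IsHW.Et_apply (hv : ρ.IsHW v n e nt et) : ρ.Et v = et • v := hv.2.2.2.2.1
theorem IsHW.pp_apply (hv : ρ.IsHW v n e nt et) : ρ.pp v = 0 := hv.2.2.2.2.2.1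
theorem IsHW.tp_apply (hv : ρ.IsHW v n e nt et) : ρ.tp v = 0 := hv.2.2.2.2.2.2

theorem IsHW.invariant_span_lowering (hv : ρ.IsHW v n e nt et) :
    ρ.Invariant (span ℂ {v, ρ.pm v, ρ.tm v, ρ.tm (ρ.pm v)}) := by
  refine ρ.invariant_span_of_forall_mem ?_
  rintro x (rfl | rfl | rfl | rfl) <;>
  simp (maxDischargeDepth := 4) [hv.N_apply, hv.E_apply, hv.Nt_apply, hv.Et_apply,
    hv.pp_apply, hv.tp_apply, Submodule.sub_mem, smul_mem, mem_span_of_mem]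

theorem IsHW.invariant_span_tm_of_Et_eq_zero (hv : ρ.IsHW v n e nt et) (het : et = 0) :
    ρ.Invariant (span ℂ {ρ.tm v, ρ.tm (ρ.pm v)}) := by
  refine ρ.invariant_span_of_forall_mem ?_
  rintro x (rfl | rfl) <;>
  simp (maxDischargeDepth := 4) [hv.N_apply, hv.E_apply, hv.Nt_apply, hv.Et_apply,
    hv.pp_apply, hv.tp_apply, het, Submodule.sub_mem, smul_mem, mem_span_of_mem]

theorem IsHW.pp_apply_combination (hv : ρ.IsHW v n e nt et) (a b c d : ℂ) :
    ρ.pp (a • v + b • ρ.pm v + c • ρ.tm v + d • ρ.tm (ρ.pm v)) =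
      (b * e + c * et) • v + (d * et) • ρ.pm v - (d * e) • ρ.tm v := by
  simp [hv.pp_apply, hv.E_apply, hv.Et_apply]
  module

theorem IsHW.tp_apply_combination (hv : ρ.IsHW v n e nt et) (a b c d : ℂ) :
    ρ.tp (a • v + b • ρ.pm v + c • ρ.tm v + d • ρ.tm (ρ.pm v)) =
      (b * et) • v - (d * et) • ρ.tm v := by
  simp [hv.tp_apply, hv.Et_apply]
  module

theorem IsHW.mem_of_invariant (hv : ρ.IsHW v n e nt et) (het : et ≠ 0) {W : Submodule ℂ V}
    (hW : ρ.Invariant W) {a b c d : ℂ}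
    (hw : a • v + b • ρ.pm v + c • ρ.tm v + d • ρ.tm (ρ.pm v) ∈ W)
    (hw0 : a • v + b • ρ.pm v + c • ρ.tm v + d • ρ.tm (ρ.pm v) ≠ 0) : v ∈ W := by
  have hpp := (hW _ hw).2.2.2.2.1
  have htp := (hW _ hw).2.2.2.2.2.2.1
  have htpp := (hW _ hpp).2.2.2.2.2.2.1
  rw [hv.pp_apply_combination] at hpp htpp
  rw [hv.tp_apply_combination] at htp
  have of_smul {r : ℂ} (hr : r ≠ 0) (h : r • v ∈ W) : v ∈ W := (W.smul_mem_iff hr).mp h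
  rcases ne_or_eq d 0 with hd | rfl
  · refine of_smul (mul_ne_zero (mul_ne_zero hd het) het) ?_
    convert htpp using 1
    simp [hv.tp_apply, hv.Et_apply]
    module
  rcases ne_or_eq b 0 with hb | rfl
  · exact of_smul (mul_ne_zero hb het) (by simpa using htp)
  rcases ne_or_eq c 0 with hc | rfl
  · exact of_smul (mul_ne_zero hc het) (by simpa using hpp)
  have ha : a ≠ 0 := by rintro rfl; simp at hw0
  exact of_smul ha (by simpa using hw)

theorem IsVerma.exists_eq_combination (h : ρ.IsVerma v n e nt et) (x : V) :
    ∃ a b c d : ℂ, a • v + b • ρ.pm v + c • ρ.tm v + d • ρ.tm (ρ.pm v) = x := by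
  have hx : x ∈ span ℂ {v, ρ.pm v, ρ.tm v, ρ.tm (ρ.pm v)} := by
    rw [h.2.2 _ h.1.invariant_span_lowering (subset_span (by simp))]
    exact mem_top
  simp only [mem_span_insert, mem_span_singleton] at hx
  obtain ⟨a, _, ⟨b, _, ⟨c, _, ⟨d, rfl⟩, rfl⟩, rfl⟩, rfl⟩ := hx
  exact ⟨a, b, c, d, by abel⟩

theorem IsVerma.notMem_span_tm (h : ρ.IsVerma v n e nt et) :
    v ∉ span ℂ {ρ.tm v, ρ.tm (ρ.pm v)} := by
  simpa [Set.image_insert_eq] using h.2.1.notMem_span_image (s := {2, 3}) (x := 0) (by decide)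

theorem IsVerma.tm_ne_zero (h : ρ.IsVerma v n e nt et) : ρ.tm v ≠ 0 := by
  simpa using h.2.1.ne_zero 2

end TakiffGl11Rep

/-- The Verma module of the Takiff superalgebra of `gl(1|1)` with highest weight
`(n, e, ñ, ẽ)` is irreducible (the only invariant subspaces are `⊥` and `⊤`) if and
only if `ẽ ≠ 0`. -/
theorem takiff_gl11_verma_irreducible_iff {V : Type*} [AddCommGroup V] [Module ℂ V]
    (ρ : TakiffGl11Rep V) (v : V) (n e nt et : ℂ) (h : ρ.IsVerma v n e nt et) :
    (∀ W : Submodule ℂ V, ρ.Invariant W → W = ⊥ ∨ W = ⊤) ↔ et ≠ 0 := by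
  constructor
  · intro hirr het
    have hmem : ρ.tm v ∈ Submodule.span ℂ {ρ.tm v, ρ.tm (ρ.pm v)} :=
      Submodule.subset_span (by simp)
    rcases hirr _ (h.1.invariant_span_tm_of_Et_eq_zero het) with hbot | htop
    · exact h.tm_ne_zero (by simpa [hbot] using hmem)
    · exact h.notMem_span_tm (htop ▸ Submodule.mem_top)
  · intro het W hW
    refine or_iff_not_imp_left.mpr fun hW0 => h.2.2 W hW ?_
    obtain ⟨w, hwW, hw0⟩ := Submodule.exists_mem_ne_zero_of_ne_bot hW0
    obtain ⟨a, b, c, d, rfl⟩ := h.exists_eq_combination w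
    exact h.1.mem_of_invariant het hW hwW hw0
end

section
/- The tensor product of two 2-dimensional semitypical irreducible g̃l(1|1)-modules S(n₁,e₁,ñ₁) and S(n₂,e₂,ñ₂) with e₁+e₂ ≠ 0 decomposes as a direct sum of two semitypical irreducibles: the highest weight vectors are v⊗w and e₁ v⊗ψ⁻w − e₂ ψ⁻v⊗w, and these generate complementary 2-dimensional submodules. -/
open Matrix TensorProduct

namespace SemitypTensor

/-- The carrier of the 2-dimensional semitypical irreducible `S(n, e, ñ)` of the Takiff
superalgebra of `gl(1|1)`, with basis `(v, ψ⁻v)`. -/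
abbrev S : Type := Fin 2 → ℂ

/- Matrices of the generators on `S(n, e, ñ)` (with `e ≠ 0`):
`Nv = nv`, `Ev = ev`, `Ñv = ñv`, `Ẽ = ψ̃± = 0`, `ψ⁺ψ⁻v = ev`. -/
noncomputable def SN (n : ℂ) : Matrix (Fin 2) (Fin 2) ℂ := !![n, 0; 0, n - 1]
noncomputable def SE (e : ℂ) : Matrix (Fin 2) (Fin 2) ℂ := e • 1
noncomputable def SNt (nt : ℂ) : Matrix (Fin 2) (Fin 2) ℂ := nt • 1
noncomputable def SEt : Matrix (Fin 2) (Fin 2) ℂ := 0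
noncomputable def Spp (e : ℂ) : Matrix (Fin 2) (Fin 2) ℂ := !![0, e; 0, 0]
noncomputable def Spm : Matrix (Fin 2) (Fin 2) ℂ := !![0, 0; 1, 0]
noncomputable def Stp : Matrix (Fin 2) (Fin 2) ℂ := 0
noncomputable def Stm : Matrix (Fin 2) (Fin 2) ℂ := 0
/-- Parity operator: `v` even, `ψ⁻v` odd. -/
noncomputable def SP : Matrix (Fin 2) (Fin 2) ℂ := !![1, 0; 0, -1]

/-- The highest weight vector `v` of `S(n, e, ñ)`. -/
noncomputable def hwv : S := Pi.single 0 1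

variable (n1 e1 nt1 n2 e2 nt2 : ℂ)

/- The coproduct (graded tensor product) action `Δ(x) = x ⊗ 1 + 1 ⊗ x` on
`S(n₁,e₁,ñ₁) ⊗ S(n₂,e₂,ñ₂)`, with Koszul signs for the odd generators:
`x(a ⊗ b) = xa ⊗ b + (−1)^{|a|} a ⊗ xb`. -/
noncomputable def ΔN : S ⊗[ℂ] S →ₗ[ℂ] S ⊗[ℂ] S :=
  TensorProduct.map (toLin' (SN n1)) LinearMap.id + TensorProduct.map LinearMap.id (toLin' (SN n2))
noncomputable def ΔE : S ⊗[ℂ] S →ₗ[ℂ] S ⊗[ℂ] S :=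
  TensorProduct.map (toLin' (SE e1)) LinearMap.id + TensorProduct.map LinearMap.id (toLin' (SE e2))
noncomputable def ΔNt : S ⊗[ℂ] S →ₗ[ℂ] S ⊗[ℂ] S :=
  TensorProduct.map (toLin' (SNt nt1)) LinearMap.id + TensorProduct.map LinearMap.id (toLin' (SNt nt2))
noncomputable def ΔEt : S ⊗[ℂ] S →ₗ[ℂ] S ⊗[ℂ] S :=
  TensorProduct.map (toLin' SEt) LinearMap.id + TensorProduct.map LinearMap.id (toLin' SEt)
noncomputable def Δpp : S ⊗[ℂ] S →ₗ[ℂ] S ⊗[ℂ] S :=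
  TensorProduct.map (toLin' (Spp e1)) LinearMap.id + TensorProduct.map (toLin' SP) (toLin' (Spp e2))
noncomputable def Δpm : S ⊗[ℂ] S →ₗ[ℂ] S ⊗[ℂ] S :=
  TensorProduct.map (toLin' Spm) LinearMap.id + TensorProduct.map (toLin' SP) (toLin' Spm)
noncomputable def Δtp : S ⊗[ℂ] S →ₗ[ℂ] S ⊗[ℂ] S :=
  TensorProduct.map (toLin' Stp) LinearMap.id + TensorProduct.map (toLin' SP) (toLin' Stp)
noncomputable def Δtm : S ⊗[ℂ] S →ₗ[ℂ] S ⊗[ℂ] S :=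
  TensorProduct.map (toLin' Stm) LinearMap.id + TensorProduct.map (toLin' SP) (toLin' Stm)

/-- A submodule of the tensor product invariant under the `g̃l(1|1)`-action. -/
def Invariant (W : Submodule ℂ (S ⊗[ℂ] S)) : Prop :=
  ∀ w ∈ W, ΔN n1 n2 w ∈ W ∧ ΔE e1 e2 w ∈ W ∧ ΔNt nt1 nt2 w ∈ W ∧ ΔEt w ∈ W ∧
    Δpp e1 e2 w ∈ W ∧ Δpm w ∈ W ∧ Δtp w ∈ W ∧ Δtm w ∈ W

/-- The two highest weight vectors of the tensor product:
`u₁ = v ⊗ w` and `u₂ = e₁ v ⊗ ψ⁻w − e₂ ψ⁻v ⊗ w`. -/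
noncomputable def u₁ : S ⊗[ℂ] S := hwv ⊗ₜ[ℂ] hwv
noncomputable def u₂ : S ⊗[ℂ] S :=
  e1 • (hwv ⊗ₜ[ℂ] toLin' Spm hwv) - e2 • (toLin' Spm hwv ⊗ₜ[ℂ] hwv)

end SemitypTensor

/-!
The graded coproduct preserves the relations `ψ⁻² = 0`, `{ψ⁺, ψ⁻} = E` and `[N, ψ⁻] = -ψ⁻`
of each factor, because the parity operator anticommutes with the odd generators and squares to
one; on the tensor product `E` acts by `e₁ + e₂` and `Ẽ`, `ψ̃±` act by `0`. Hence every vector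
`u` killed by `ψ⁺` that is an eigenvector of `N` spans, together with `ψ⁻u`, an invariant plane
on which `ψ⁺ψ⁻u = (e₁ + e₂) u`; when `e₁ + e₂ ≠ 0` this plane is irreducible. Both `u₁` and
`u₂` are such vectors, and `u₁, ψ⁻u₁, u₂, ψ⁻u₂` span the 4-dimensional tensor product (their
matrix in the basis `v⊗v, v⊗ψ⁻v, ψ⁻v⊗v, ψ⁻v⊗ψ⁻v` has determinant `-(e₁ + e₂)²`), so the two
planes are complementary by counting dimensions.
-/

namespace Submodule

theorem forall_apply_mem_span_pair {R M : Type*} [Semiring R] [AddCommMonoid M] [Module R M]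
    {f : Module.End R M} {a c : M} (ha : f a ∈ span R {a, c}) (hc : f c ∈ span R {a, c}) :
    ∀ w ∈ span R {a, c}, f w ∈ span R {a, c} := fun _ hw =>
  span_le (p := (span R {a, c}).comap f) |>.2
    (Set.insert_subset_iff.2 ⟨ha, Set.singleton_subset_iff.2 hc⟩) hw

variable {K V : Type*} [DivisionRing K] [AddCommGroup V] [Module K V]

theorem eq_bot_of_lt_span_pair {a c : V} {k : K} (hk : k ≠ 0) {f g : Module.End K V}
    (hfa : f a = c) (hfc : f c = 0) (hgc : g c = k • a) {U : Submodule K V}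
    (hUf : ∀ w ∈ U, f w ∈ U) (hUg : ∀ w ∈ U, g w ∈ U) (hlt : U < span K {a, c}) : U = ⊥ := by
  refine (Submodule.eq_bot_iff U).2 fun x hxU => by_contra fun hx => hlt.not_ge ?_
  obtain ⟨α, γ, rfl⟩ := mem_span_pair.1 (hlt.le hxU)
  have hc : c ∈ U := by
    by_cases hα : α = 0
    · have hγ : γ ≠ 0 := by rintro rfl; simp [hα] at hx
      simpa [hα, smul_mem_iff U hγ] using hxU
    · have hfx := hUf _ hxU
      simp only [map_add, map_smul, hfa, hfc, smul_zero, add_zero] at hfx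
      exact (smul_mem_iff U hα).1 hfx
  have ha : a ∈ U := (smul_mem_iff U hk).1 (hgc ▸ hUg c hc)
  exact span_le.2 (Set.insert_subset_iff.2 ⟨ha, Set.singleton_subset_iff.2 hc⟩)

theorem isCompl_span_pair_of_span_eq_top [FiniteDimensional K V] (hV : Module.finrank K V = 4)
    {a b c d : V} (h : span K {a, b, c, d} = ⊤) :
    IsCompl (span K {a, b}) (span K {c, d}) ∧
      Module.finrank K (span K {a, b}) = 2 ∧ Module.finrank K (span K {c, d}) = 2 := by
  have hsup : span K {a, b} ⊔ span K {c, d} = ⊤ := by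
    rw [← span_union, Set.insert_union, Set.singleton_union, h]
  have hpair (x y : V) : Module.finrank K (span K {x, y}) ≤ 2 := by
    classical
    exact (finrank_span_le_card ({x, y} : Set V)).trans (by simpa using Finset.card_le_two)
  have hab := hpair a b
  have hcd := hpair c d
  have hdim := finrank_sup_add_finrank_inf_eq (span K {a, b}) (span K {c, d})
  rw [hsup, finrank_top, hV] at hdim
  have hinf : span K {a, b} ⊓ span K {c, d} = ⊥ := Submodule.finrank_eq_zero.1 (by omega)
  exact ⟨⟨disjoint_iff.2 hinf, codisjoint_iff.2 hsup⟩, by omega, by omega⟩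

end Submodule

theorem Module.End.apply_lower_of_highestWeight {R V : Type*} [CommRing R] [AddCommGroup V]
    [Module R V] {N ψp ψm : Module.End R V} {e l : R} {u : V} (hmm : ψm * ψm = 0)
    (hpm : ψp * ψm + ψm * ψp = e • 1) (hNm : N * ψm - ψm * N = -ψm) (hp : ψp u = 0)
    (hN : N u = l • u) :
    ψm (ψm u) = 0 ∧ ψp (ψm u) = e • u ∧ N (ψm u) = (l - 1) • ψm u := by
  have hpm_u := LinearMap.congr_fun hpm u
  have hNm_u := LinearMap.congr_fun hNm u
  simp only [LinearMap.add_apply, LinearMap.sub_apply, LinearMap.neg_apply, LinearMap.smul_apply,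
    Module.End.mul_apply, Module.End.one_apply, hp, hN, map_zero, add_zero, map_smul] at hpm_u hNm_u
  refine ⟨by simpa using LinearMap.congr_fun hmm u, hpm_u, ?_⟩
  rw [sub_eq_iff_eq_add.1 hNm_u, sub_smul, one_smul, neg_add_eq_sub]

theorem Matrix.toLin'_mul_toLin' {R n : Type*} [CommSemiring R] [Fintype n] [DecidableEq n]
    (A B : Matrix n n R) : toLin' A * toLin' B = toLin' (A * B) :=
  (toLin'_mul A B).symm

namespace TensorProduct

theorem eq_top_of_tmul_mem {R M N : Type*} [CommSemiring R] [AddCommMonoid M] [Module R M]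
    [AddCommMonoid N] [Module R N] {s : Set M} {t : Set N} (hs : Submodule.span R s = ⊤)
    (ht : Submodule.span R t = ⊤) {W : Submodule R (M ⊗[R] N)}
    (h : ∀ x ∈ s, ∀ y ∈ t, x ⊗ₜ y ∈ W) : W = ⊤ := by
  rw [eq_top_iff, ← map₂_mk_top_top_eq_top, ← hs, ← ht, Submodule.map₂_span_span,
    Submodule.span_le]
  rintro _ ⟨x, hx, y, hy, rfl⟩
  exact h x hx y hy

variable {R M N : Type*} [CommRing R] [AddCommGroup M] [Module R M] [AddCommGroup N] [Module R N]

theorem map_neg_left (f : Module.End R M) (g : Module.End R N) : map (-f) g = -map f g := by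
  ext; simp [neg_tmul]

theorem map_neg_right (f : Module.End R M) (g : Module.End R N) : map f (-g) = -map f g := by
  ext; simp [tmul_neg]

theorem map_sub_left (f f' : Module.End R M) (g : Module.End R N) :
    map (f - f') g = map f g - map f' g := by
  ext; simp [sub_tmul]

theorem map_sub_right (f : Module.End R M) (g g' : Module.End R N) :
    map f (g - g') = map f g - map f g' := by
  ext; simp [tmul_sub]

theorem map_smul_one_add_map_one_smul (a b : R) :
    map (a • 1 : Module.End R M) 1 + map 1 (b • 1 : Module.End R N) = (a + b) • 1 := by
  rw [map_smul_left, map_smul_right, TensorProduct.map_one, add_smul]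

/- With `P` a parity operator, `map f 1 + map P g` is how an odd element acting by `f` and `g` on
the factors acts on the graded tensor product, and `map z 1 + map 1 w` how an even one acts. -/
theorem map_add_map_mul_self_eq_zero {P f : Module.End R M} {g : Module.End R N}
    (hPf : P * f = -(f * P)) (hf : f * f = 0) (hg : g * g = 0) :
    (map f 1 + map P g) * (map f 1 + map P g) = 0 := by
  simp only [mul_add, add_mul, ← TensorProduct.map_mul, mul_one, one_mul, hPf, hf, hg,
    map_zero_left, map_zero_right, map_neg_left]
  abel

theorem map_add_map_anticomm {P f₁ f₂ : Module.End R M} {g₁ g₂ : Module.End R N}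
    (hP : P * P = 1) (h₁ : P * f₁ = -(f₁ * P)) (h₂ : P * f₂ = -(f₂ * P)) :
    (map f₁ 1 + map P g₁) * (map f₂ 1 + map P g₂) + (map f₂ 1 + map P g₂) * (map f₁ 1 + map P g₁)
      = map (f₁ * f₂ + f₂ * f₁) 1 + map 1 (g₁ * g₂ + g₂ * g₁) := by
  simp only [mul_add, add_mul, ← TensorProduct.map_mul, mul_one, one_mul, hP, h₁, h₂,
    map_neg_left, map_add_left, map_add_right]
  abel

theorem map_add_map_commutator {P f z : Module.End R M} {g w : Module.End R N}
    (hP : z * P = P * z) :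
    (map z 1 + map 1 w) * (map f 1 + map P g) - (map f 1 + map P g) * (map z 1 + map 1 w)
      = map (z * f - f * z) 1 + map P (w * g - g * w) := by
  simp only [mul_add, add_mul, ← TensorProduct.map_mul, mul_one, one_mul, hP,
    map_sub_left, map_sub_right]
  abel

end TensorProduct

namespace SemitypTensor

theorem SP_mul_SP : toLin' SP * toLin' SP = 1 := by
  rw [toLin'_mul_toLin', Module.End.one_eq_id, ← toLin'_one]
  congr 1
  ext i j; fin_cases i <;> fin_cases j <;> simp [SP, Matrix.mul_apply]

theorem SP_mul_Spm : toLin' SP * toLin' Spm = -(toLin' Spm * toLin' SP) := by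
  rw [toLin'_mul_toLin', toLin'_mul_toLin', ← map_neg]
  congr 1
  ext i j; fin_cases i <;> fin_cases j <;> simp [SP, Spm, Matrix.mul_apply]

theorem SP_mul_Spp (e : ℂ) : toLin' SP * toLin' (Spp e) = -(toLin' (Spp e) * toLin' SP) := by
  rw [toLin'_mul_toLin', toLin'_mul_toLin', ← map_neg]
  congr 1
  ext i j; fin_cases i <;> fin_cases j <;> simp [SP, Spp, Matrix.mul_apply]

theorem SN_mul_SP (n : ℂ) : toLin' (SN n) * toLin' SP = toLin' SP * toLin' (SN n) := by
  rw [toLin'_mul_toLin', toLin'_mul_toLin']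
  congr 1
  ext i j; fin_cases i <;> fin_cases j <;> simp [SP, SN, Matrix.mul_apply]

theorem Spm_mul_Spm : toLin' Spm * toLin' Spm = 0 := by
  rw [toLin'_mul_toLin', ← map_zero toLin']
  congr 1
  ext i j; fin_cases i <;> fin_cases j <;> simp [Spm, Matrix.mul_apply]

theorem Spp_mul_Spm_add_Spm_mul_Spp (e : ℂ) :
    toLin' (Spp e) * toLin' Spm + toLin' Spm * toLin' (Spp e) = e • 1 := by
  rw [toLin'_mul_toLin', toLin'_mul_toLin', ← map_add, Module.End.one_eq_id, ← toLin'_one,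
    ← map_smul]
  congr 1
  ext i j; fin_cases i <;> fin_cases j <;> simp [Spp, Spm]

theorem SN_mul_Spm_sub_Spm_mul_SN (n : ℂ) :
    toLin' (SN n) * toLin' Spm - toLin' Spm * toLin' (SN n) = -toLin' Spm := by
  rw [toLin'_mul_toLin', toLin'_mul_toLin', ← map_sub, ← map_neg]
  congr 1
  ext i j; fin_cases i <;> fin_cases j <;> simp [SN, Spm]

theorem ΔE_eq_smul (e1 e2 : ℂ) : ΔE e1 e2 = (e1 + e2) • 1 := by
  rw [← map_smul_one_add_map_one_smul]
  simp only [ΔE, SE, map_smul, toLin'_one]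
  rfl

theorem ΔNt_eq_smul (nt1 nt2 : ℂ) : ΔNt nt1 nt2 = (nt1 + nt2) • 1 := by
  rw [← map_smul_one_add_map_one_smul]
  simp only [ΔNt, SNt, map_smul, toLin'_one]
  rfl

theorem ΔEt_eq_zero : ΔEt = 0 := by simp [ΔEt, SEt]

theorem Δtp_eq_zero : Δtp = 0 := by simp [Δtp, Stp]

theorem Δtm_eq_zero : Δtm = 0 := by simp [Δtm, Stm]

theorem Δpm_mul_Δpm : Δpm * Δpm = 0 :=
  map_add_map_mul_self_eq_zero SP_mul_Spm Spm_mul_Spm Spm_mul_Spm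

theorem Δpp_mul_Δpm_add_Δpm_mul_Δpp (e1 e2 : ℂ) :
    Δpp e1 e2 * Δpm + Δpm * Δpp e1 e2 = (e1 + e2) • 1 := by
  rw [Δpp, Δpm, ← Module.End.one_eq_id, map_add_map_anticomm SP_mul_SP (SP_mul_Spp e1) SP_mul_Spm,
    Spp_mul_Spm_add_Spm_mul_Spp, Spp_mul_Spm_add_Spm_mul_Spp, map_smul_one_add_map_one_smul]

theorem ΔN_mul_Δpm_sub_Δpm_mul_ΔN (n1 n2 : ℂ) :
    ΔN n1 n2 * Δpm - Δpm * ΔN n1 n2 = -Δpm := by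
  rw [ΔN, Δpm, ← Module.End.one_eq_id, map_add_map_commutator (SN_mul_SP n1),
    SN_mul_Spm_sub_Spm_mul_SN, SN_mul_Spm_sub_Spm_mul_SN, map_neg_left, map_neg_right]
  abel

theorem Spp_hwv (e : ℂ) : toLin' (Spp e) hwv = 0 := by
  ext i; fin_cases i <;> simp [hwv, Spp]

theorem SN_hwv (n : ℂ) : toLin' (SN n) hwv = n • hwv := by
  ext i; fin_cases i <;> simp [hwv, SN]

theorem SP_hwv : toLin' SP hwv = hwv := by
  ext i; fin_cases i <;> simp [hwv, SP]

theorem span_hwv_Spm_hwv : Submodule.span ℂ {hwv, toLin' Spm hwv} = ⊤ :=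
  eq_top_iff.2 fun x _ => Submodule.mem_span_pair.2
    ⟨x 0, x 1, by ext i; fin_cases i <;> simp [hwv, Spm]⟩

theorem apply_lower_hwv (e n : ℂ) :
    toLin' Spm (toLin' Spm hwv) = 0 ∧ toLin' (Spp e) (toLin' Spm hwv) = e • hwv ∧
      toLin' (SN n) (toLin' Spm hwv) = (n - 1) • toLin' Spm hwv :=
  Module.End.apply_lower_of_highestWeight Spm_mul_Spm (Spp_mul_Spm_add_Spm_mul_Spp e)
    (SN_mul_Spm_sub_Spm_mul_SN n) (Spp_hwv e) (SN_hwv n)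

theorem SP_Spm_hwv : toLin' SP (toLin' Spm hwv) = -toLin' Spm hwv := by
  have h := LinearMap.congr_fun SP_mul_Spm hwv
  rwa [Module.End.mul_apply, LinearMap.neg_apply, Module.End.mul_apply, SP_hwv] at h

theorem Δpp_u₁ (e1 e2 : ℂ) : Δpp e1 e2 u₁ = 0 := by
  simp only [u₁, Δpp, LinearMap.add_apply, map_tmul, LinearMap.id_apply, Spp_hwv, tmul_zero,
    zero_tmul, add_zero]

theorem ΔN_u₁ (n1 n2 : ℂ) : ΔN n1 n2 u₁ = (n1 + n2) • u₁ := by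
  simp only [u₁, ΔN, LinearMap.add_apply, map_tmul, LinearMap.id_apply, SN_hwv, smul_tmul',
    tmul_smul, add_smul]

theorem Δpm_u₁ : Δpm u₁ = toLin' Spm hwv ⊗ₜ hwv + hwv ⊗ₜ toLin' Spm hwv := by
  simp only [u₁, Δpm, LinearMap.add_apply, map_tmul, LinearMap.id_apply, SP_hwv]

theorem Δpp_u₂ (e1 e2 : ℂ) : Δpp e1 e2 (u₂ e1 e2) = 0 := by
  simp only [u₂, Δpp, map_sub, map_smul, LinearMap.add_apply, map_tmul, LinearMap.id_apply,
    Spp_hwv, (apply_lower_hwv e1 0).2.1, (apply_lower_hwv e2 0).2.1, SP_hwv, tmul_zero,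
    zero_tmul, add_zero, zero_add, tmul_smul, ← smul_tmul']
  module

theorem ΔN_u₂ (e1 e2 n1 n2 : ℂ) : ΔN n1 n2 (u₂ e1 e2) = (n1 + n2 - 1) • u₂ e1 e2 := by
  simp only [u₂, ΔN, map_sub, map_smul, LinearMap.add_apply, map_tmul, LinearMap.id_apply,
    SN_hwv, (apply_lower_hwv 0 n1).2.2, (apply_lower_hwv 0 n2).2.2, tmul_smul, ← smul_tmul']
  module

theorem Δpm_u₂ (e1 e2 : ℂ) :
    Δpm (u₂ e1 e2) = (e1 + e2) • (toLin' Spm hwv ⊗ₜ toLin' Spm hwv) := by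
  simp only [u₂, Δpm, map_sub, map_smul, LinearMap.add_apply, map_tmul, LinearMap.id_apply,
    (apply_lower_hwv 0 0).1, SP_hwv, SP_Spm_hwv, tmul_zero, zero_tmul, add_zero, zero_add,
    neg_tmul]
  module

theorem span_u₁_u₂_eq_top {e1 e2 : ℂ} (he : e1 + e2 ≠ 0) :
    Submodule.span ℂ {u₁, Δpm u₁, u₂ e1 e2, Δpm (u₂ e1 e2)} = ⊤ := by
  set W := Submodule.span ℂ {u₁, Δpm u₁, u₂ e1 e2, Δpm (u₂ e1 e2)}
  have h₁ : u₁ ∈ W := Submodule.subset_span (by simp)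
  have h₂ : Δpm u₁ ∈ W := Submodule.subset_span (by simp)
  have h₃ : u₂ e1 e2 ∈ W := Submodule.subset_span (by simp)
  have h₄ : Δpm (u₂ e1 e2) ∈ W := Submodule.subset_span (by simp)
  rw [Δpm_u₁] at h₂
  rw [Δpm_u₂] at h₄
  refine TensorProduct.eq_top_of_tmul_mem span_hwv_Spm_hwv span_hwv_Spm_hwv ?_
  simp only [Set.mem_insert_iff, Set.mem_singleton_iff, forall_eq_or_imp, forall_eq]
  refine ⟨⟨h₁, (W.smul_mem_iff he).1 ?_⟩, (W.smul_mem_iff he).1 ?_, (W.smul_mem_iff he).1 h₄⟩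
  · convert W.add_mem (W.smul_mem e2 h₂) h₃ using 1
    simp only [u₂]
    module
  · convert W.sub_mem (W.smul_mem e1 h₂) h₃ using 1
    simp only [u₂]
    module

theorem finrank_S_tensor_S : Module.finrank ℂ (S ⊗[ℂ] S) = 4 := by
  simp [Module.finrank_tensorProduct]

section HighestWeight

variable {n1 e1 n2 e2 l : ℂ} {u : S ⊗[ℂ] S}

theorem apply_Δpm_of_highestWeight (hpp : Δpp e1 e2 u = 0) (hN : ΔN n1 n2 u = l • u) :
    Δpm (Δpm u) = 0 ∧ Δpp e1 e2 (Δpm u) = (e1 + e2) • u ∧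
      ΔN n1 n2 (Δpm u) = (l - 1) • Δpm u :=
  Module.End.apply_lower_of_highestWeight Δpm_mul_Δpm (Δpp_mul_Δpm_add_Δpm_mul_Δpp e1 e2)
    (ΔN_mul_Δpm_sub_Δpm_mul_ΔN n1 n2) hpp hN

theorem invariant_span_of_highestWeight (nt1 nt2 : ℂ) (hpp : Δpp e1 e2 u = 0)
    (hN : ΔN n1 n2 u = l • u) :
    Invariant n1 e1 nt1 n2 e2 nt2 (Submodule.span ℂ {u, Δpm u}) := by
  obtain ⟨hmm, hpm, hNm⟩ := apply_Δpm_of_highestWeight hpp hN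
  set W := Submodule.span ℂ {u, Δpm u}
  have hu : u ∈ W := Submodule.subset_span (by simp)
  have hc : Δpm u ∈ W := Submodule.subset_span (by simp)
  intro w hw
  refine ⟨Submodule.forall_apply_mem_span_pair (hN ▸ W.smul_mem _ hu) (hNm ▸ W.smul_mem _ hc) w hw,
    ?_, ?_, ?_,
    Submodule.forall_apply_mem_span_pair (hpp ▸ W.zero_mem) (hpm ▸ W.smul_mem _ hu) w hw,
    Submodule.forall_apply_mem_span_pair hc (hmm ▸ W.zero_mem) w hw, ?_, ?_⟩
  · rw [ΔE_eq_smul]; exact W.smul_mem _ hw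
  · rw [ΔNt_eq_smul]; exact W.smul_mem _ hw
  · rw [ΔEt_eq_zero]; exact W.zero_mem
  · rw [Δtp_eq_zero]; exact W.zero_mem
  · rw [Δtm_eq_zero]; exact W.zero_mem

theorem eq_bot_of_lt_span_highestWeight {nt1 nt2 : ℂ} (he : e1 + e2 ≠ 0)
    (hpp : Δpp e1 e2 u = 0) (hN : ΔN n1 n2 u = l • u) {U : Submodule ℂ (S ⊗[ℂ] S)}
    (hU : Invariant n1 e1 nt1 n2 e2 nt2 U) (hlt : U < Submodule.span ℂ {u, Δpm u}) : U = ⊥ := by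
  obtain ⟨hmm, hpm, -⟩ := apply_Δpm_of_highestWeight hpp hN
  exact Submodule.eq_bot_of_lt_span_pair he rfl hmm hpm (fun w hw => (hU w hw).2.2.2.2.2.1)
    (fun w hw => (hU w hw).2.2.2.2.1) hlt

end HighestWeight

end SemitypTensor

open SemitypTensor in
theorem semitypical_tensor_decomposition_general (n1 e1 nt1 n2 e2 nt2 : ℂ)
    (he : e1 + e2 ≠ 0) :
    Δpp e1 e2 (u₁) = 0 ∧ Δtp (u₁) = 0 ∧
    Δpp e1 e2 (u₂ e1 e2) = 0 ∧ Δtp (u₂ e1 e2) = 0 ∧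
    Invariant n1 e1 nt1 n2 e2 nt2 (Submodule.span ℂ {u₁, Δpm u₁}) ∧
    Invariant n1 e1 nt1 n2 e2 nt2 (Submodule.span ℂ {u₂ e1 e2, Δpm (u₂ e1 e2)}) ∧
    IsCompl (Submodule.span ℂ {u₁, Δpm u₁}) (Submodule.span ℂ {u₂ e1 e2, Δpm (u₂ e1 e2)}) ∧
    Module.finrank ℂ (Submodule.span ℂ {u₁, Δpm u₁}) = 2 ∧
    Module.finrank ℂ (Submodule.span ℂ {u₂ e1 e2, Δpm (u₂ e1 e2)}) = 2 ∧
    (∀ U : Submodule ℂ (S ⊗[ℂ] S), Invariant n1 e1 nt1 n2 e2 nt2 U →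
      U < Submodule.span ℂ {u₁, Δpm u₁} → U = ⊥) ∧
    (∀ U : Submodule ℂ (S ⊗[ℂ] S), Invariant n1 e1 nt1 n2 e2 nt2 U →
      U < Submodule.span ℂ {u₂ e1 e2, Δpm (u₂ e1 e2)} → U = ⊥) := by
  have hpp₁ := Δpp_u₁ e1 e2
  have hN₁ := ΔN_u₁ n1 n2
  have hpp₂ := Δpp_u₂ e1 e2
  have hN₂ := ΔN_u₂ e1 e2 n1 n2
  obtain ⟨hcompl, hrank₁, hrank₂⟩ :=
    Submodule.isCompl_span_pair_of_span_eq_top finrank_S_tensor_S (span_u₁_u₂_eq_top he)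
  refine ⟨hpp₁, by rw [Δtp_eq_zero]; rfl, hpp₂, by rw [Δtp_eq_zero]; rfl,
    invariant_span_of_highestWeight nt1 nt2 hpp₁ hN₁,
    invariant_span_of_highestWeight nt1 nt2 hpp₂ hN₂, hcompl, hrank₁, hrank₂,
    fun U hU hlt => eq_bot_of_lt_span_highestWeight he hpp₁ hN₁ hU hlt,
    fun U hU hlt => eq_bot_of_lt_span_highestWeight he hpp₂ hN₂ hU hlt⟩

open SemitypTensor in
/-- The tensor product of two 2-dimensional semitypical irreducible `g̃l(1|1)`-modules
`S(n₁,e₁,ñ₁)` and `S(n₂,e₂,ñ₂)` with `e₁ + e₂ ≠ 0` decomposes as a direct sum of two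
semitypical irreducibles: the highest weight vectors `u₁ = v⊗w` and
`u₂ = e₁ v⊗ψ⁻w − e₂ ψ⁻v⊗w` (both annihilated by `ψ⁺` and `ψ̃⁺`) generate complementary
invariant 2-dimensional irreducible submodules. -/
theorem semitypical_tensor_decomposition (n1 e1 nt1 n2 e2 nt2 : ℂ)
    (he1 : e1 ≠ 0) (he2 : e2 ≠ 0) (he : e1 + e2 ≠ 0) :
    Δpp e1 e2 (u₁) = 0 ∧ Δtp (u₁) = 0 ∧
    Δpp e1 e2 (u₂ e1 e2) = 0 ∧ Δtp (u₂ e1 e2) = 0 ∧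
    Invariant n1 e1 nt1 n2 e2 nt2 (Submodule.span ℂ {u₁, Δpm u₁}) ∧
    Invariant n1 e1 nt1 n2 e2 nt2 (Submodule.span ℂ {u₂ e1 e2, Δpm (u₂ e1 e2)}) ∧
    IsCompl (Submodule.span ℂ {u₁, Δpm u₁}) (Submodule.span ℂ {u₂ e1 e2, Δpm (u₂ e1 e2)}) ∧
    Module.finrank ℂ (Submodule.span ℂ {u₁, Δpm u₁}) = 2 ∧
    Module.finrank ℂ (Submodule.span ℂ {u₂ e1 e2, Δpm (u₂ e1 e2)}) = 2 ∧
    (∀ U : Submodule ℂ (S ⊗[ℂ] S), Invariant n1 e1 nt1 n2 e2 nt2 U →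
      U < Submodule.span ℂ {u₁, Δpm u₁} → U = ⊥) ∧
    (∀ U : Submodule ℂ (S ⊗[ℂ] S), Invariant n1 e1 nt1 n2 e2 nt2 U →
      U < Submodule.span ℂ {u₂ e1 e2, Δpm (u₂ e1 e2)} → U = ⊥) :=
  semitypical_tensor_decomposition_general n1 e1 nt1 n2 e2 nt2 he
end

section
/- On the 8-dimensional generalized Verma module P of the Takiff superalgebra of gl(1|1), generated freely by ψ⁻, ψ̃⁻ from vectors v, w with Ñv = ñv + w and Ñw = ñw, the operator Ñ − ñ satisfies (Ñ−ñ)²ψ⁻v = −2ψ̃⁻w ≠ 0 and (Ñ−ñ)³ = 0, i.e. Ñ has a Jordan block of rank exactly 3. -/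
open Matrix

/-- The action of `Ñ` on one 4-dimensional "Verma block" with basis
`(u, ψ⁻u, ψ̃⁻u, ψ̃⁻ψ⁻u)`, for a generator `u` of `Ñ`-eigenvalue `ñ`:
`Ñψ⁻u = ñψ⁻u − ψ̃⁻u` (via `[Ñ,ψ⁻] = −ψ̃⁻`, `[Ñ,ψ̃⁻] = 0`). -/
noncomputable def NtBlock (nt : ℂ) : Matrix (Fin 4) (Fin 4) ℂ :=
  !![nt, 0, 0, 0; 0, nt, 0, 0; 0, -1, nt, 0; 0, 0, 0, nt]

/-- The action of `Ñ` on the 8-dimensional generalised Verma module `P`, with basis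
`(v, ψ⁻v, ψ̃⁻v, ψ̃⁻ψ⁻v)` (first block) and `(w, ψ⁻w, ψ̃⁻w, ψ̃⁻ψ⁻w)` (second block),
where `Ñv = ñv + w` and `Ñw = ñw`: the off-diagonal block is the identity `v-block → w-block`. -/
noncomputable def NtP (nt : ℂ) : Matrix (Fin 4 ⊕ Fin 4) (Fin 4 ⊕ Fin 4) ℂ :=
  Matrix.fromBlocks (NtBlock nt) 0 1 (NtBlock nt)

/-! `Ñ − ñ` acts on each Verma block as the square-zero matrix `B = −E₂₁` (sending `ψ⁻u ↦ −ψ̃⁻u`),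
and on `P` as the block matrix `[[B, 0], [1, B]]`. Since `B² = 0`, its square is `[[0, 0], [2B, 0]]`
and its cube vanishes; the square sends `ψ⁻v` to `2Bψ⁻v = −2ψ̃⁻w`. -/

section SquareZeroBlocks

variable {n R : Type*} [DecidableEq n] [Ring R]

lemma fromBlocks_sub_smul_one (A : Matrix n n R) (c : R) :
    fromBlocks A 0 1 A - c • 1 = fromBlocks (A - c • 1) 0 1 (A - c • 1) := by
  ext (i | i) (j | j) <;> simp [one_apply]

variable [Fintype n]

lemma fromBlocks_sq_of_mul_self_eq_zero {B : Matrix n n R} (hB : B * B = 0) :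
    fromBlocks B 0 1 B ^ 2 = fromBlocks 0 0 (2 • B) 0 := by
  rw [sq, fromBlocks_multiply, two_nsmul]
  simp [hB]

lemma fromBlocks_pow_three_of_mul_self_eq_zero {B : Matrix n n R} (hB : B * B = 0) :
    fromBlocks B 0 1 B ^ 3 = 0 := by
  rw [pow_succ, fromBlocks_sq_of_mul_self_eq_zero hB, fromBlocks_multiply]
  simp [mul_assoc, hB]

end SquareZeroBlocks

lemma NtBlock_sub_smul_one (nt : ℂ) : NtBlock nt - nt • 1 = single 2 1 (-1) := by
  ext i j
  fin_cases i <;> fin_cases j <;> simp [NtBlock, one_apply, single]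

lemma NtBlock_sub_smul_one_mul_self (nt : ℂ) :
    (NtBlock nt - nt • 1) * (NtBlock nt - nt • 1) = 0 := by
  rw [NtBlock_sub_smul_one]
  simp

/-- On the 8-dimensional generalised Verma module `P` of the Takiff superalgebra of
`gl(1|1)`, generated freely by `ψ⁻, ψ̃⁻` from `v, w` with `Ñv = ñv + w`, `Ñw = ñw`,
the operator `Ñ − ñ` satisfies `(Ñ−ñ)² ψ⁻v = −2 ψ̃⁻w ≠ 0` and `(Ñ−ñ)³ = 0`, i.e. `Ñ`
has a Jordan block of rank exactly 3. -/
theorem generalized_verma_Nt_jordan_rank_three (nt : ℂ) :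
    (NtP nt - nt • 1) ^ 2 *ᵥ (Pi.single (Sum.inl 1) 1 : Fin 4 ⊕ Fin 4 → ℂ) =
      (-2 : ℂ) • (Pi.single (Sum.inr 2) 1 : Fin 4 ⊕ Fin 4 → ℂ) ∧
    ((-2 : ℂ) • (Pi.single (Sum.inr 2) 1 : Fin 4 ⊕ Fin 4 → ℂ)) ≠ 0 ∧
    (NtP nt - nt • 1) ^ 3 = 0 := by
  have hB := NtBlock_sub_smul_one_mul_self nt
  rw [NtP, fromBlocks_sub_smul_one, fromBlocks_sq_of_mul_self_eq_zero hB,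
    fromBlocks_pow_three_of_mul_self_eq_zero hB, NtBlock_sub_smul_one]
  refine ⟨?_, smul_ne_zero (by norm_num) (Pi.single_ne_zero_iff.mpr one_ne_zero), rfl⟩
  rw [fromBlocks_mulVec]
  ext (i | i) <;> fin_cases i <;> simp [single_mulVec]
end
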